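/- arXiv:2111.15444 — 2 statements merged into one kernel-verified Lean document; each statement's English description precedes it below -/
import Mathlib

section
/- Let θ ∈ (0,1], ε_q > 0, and let σ ⊂ ℝ³ be a set such that for every x ∈ σ and every ε̂ ∈ (0, θ) there exists r_{x,ε̂} ∈ (0, ε̂/5) with μ_x(r_{x,ε̂}) ≥ (ε_q/2) r_{x,ε̂}^{2δ}, where μ_x(r) := ∫_{T-r²}^{T} ∫_{B(x,r)} F dx ds for a fixed nonnegative function F ∈ L¹(ℝ³ × (T-θ², T)) and δ ∈ (0, 1/2]. Then H^{2δ}(σ) ≤ (2·5^{2δ}/ε_q) ∫_{T-ε̂²}^{T} ∫_{ℝ³} F dx ds for every ε̂ ∈ (0,θ), and consequently H^{2δ}(σ) = 0. -/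
/-!
Fix a scale ε ∈ (0, θ). At any smaller scale η, every x ∈ σ has a radius r_x < η/10, r_x < ε,
whose space-time cylinder B(x, r_x) × (T - r_x², T) carries F-mass at least (εq/2) r_x^{2δ}.
By Vitali, countably many of the balls B(x, r_x) are disjoint while their 5-fold enlargements,
of diameter at most 10 r_x, cover σ. The cylinders over disjoint balls are disjoint and lie in the
slab ℝ³ × (T - ε², T), so H^{2δ}(σ) ≤ 10^{2δ} (2/εq) ∫_slab F⁺. The slabs shrink to the empty
set and F is integrable on the largest one, so this bound tends to 0 with ε.
-/

open MeasureTheory Metric Set Filter Topology TopologicalSpace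
open scoped ENNReal

section Hausdorff

variable {X : Type*} [MetricSpace X]

theorem ediam_closedBall_le_ofReal (x : X) {r : ℝ} (hr : 0 ≤ r) :
    ediam (closedBall x r) ≤ 2 * ENNReal.ofReal r := by
  rw [← closedEBall_ofReal hr]
  exact ediam_closedEBall_le

theorem exists_countable_pairwiseDisjoint_closedBall_cover [SeparableSpace X] (s : Set X)
    {ρ : X → ℝ} {R : ℝ} (hρ : ∀ x ∈ s, ρ x ∈ Ioc 0 R) :
    ∃ u ⊆ s, u.Countable ∧ u.PairwiseDisjoint (fun x => closedBall x (ρ x)) ∧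
      s ⊆ ⋃ x ∈ u, closedBall x (5 * ρ x) := by
  obtain ⟨u, hus, hdisj, hcov⟩ := Vitali.exists_disjoint_subfamily_covering_enlargement_closedBall
    s id ρ R (fun x hx => (hρ x hx).2) 5 (by norm_num)
  refine ⟨u, hus, ?_, hdisj, fun x hx => ?_⟩
  · exact (hdisj.mono fun x => ball_subset_closedBall).countable_of_isOpen
      (fun _ _ => isOpen_ball) fun x hx => nonempty_ball.2 (hρ x (hus hx)).1
  · obtain ⟨y, hyu, hxy⟩ := hcov x hx
    exact mem_biUnion hyu (hxy (mem_closedBall_self (hρ x hx).1.le))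

variable [MeasurableSpace X] [BorelSpace X]

theorem hausdorffMeasure_le_of_forall_countable_cover {d : ℝ} {s : Set X} {M : ℝ≥0∞}
    (h : ∀ η : ℝ, 0 < η → ∃ 𝒞 : Set (Set X), 𝒞.Countable ∧ s ⊆ ⋃₀ 𝒞 ∧
      (∀ t ∈ 𝒞, ediam t ≤ ENNReal.ofReal η) ∧ ∑' t : 𝒞, ediam (t : Set X) ^ d ≤ M) :
    μH[d] s ≤ M := by
  choose 𝒞 h𝒞c h𝒞s h𝒞d h𝒞M using fun n : ℕ => h (1 / (n + 1)) Nat.one_div_pos_of_nat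
  have (n : ℕ) : Countable (𝒞 n) := (h𝒞c n).to_subtype
  have hη : Tendsto (fun n : ℕ => ENNReal.ofReal (1 / (n + 1))) atTop (𝓝 0) := by
    simpa using ENNReal.tendsto_ofReal tendsto_one_div_add_atTop_nhds_zero_nat
  calc μH[d] s ≤ liminf (fun n => ∑' t : 𝒞 n, ediam (t : Set X) ^ d) atTop :=
        Measure.hausdorffMeasure_le_liminf_tsum d s _ hη (fun n (t : 𝒞 n) => (t : Set X))
          (.of_forall fun n t => h𝒞d n t t.2) (.of_forall fun n => sUnion_eq_iUnion ▸ h𝒞s n)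
    _ ≤ M := liminf_le_of_frequently_le' (.of_forall h𝒞M)

theorem hausdorffMeasure_le_of_forall_exists_radius [SeparableSpace X] {Y : Type*}
    [MeasurableSpace Y] (ν : Measure (X × Y)) {d : ℝ} (hd : 0 ≤ d) {s : Set X}
    {A : Set (X × Y)} {C : ℝ≥0∞} {Φ : X → ℝ → Set (X × Y)}
    (hΦ : ∀ x r, Φ x r ⊆ Prod.fst ⁻¹' ball x r) (hΦm : ∀ x r, MeasurableSet (Φ x r))
    (h : ∀ x ∈ s, ∀ η > 0, ∃ r ∈ Ioo 0 η, Φ x r ⊆ A ∧ ENNReal.ofReal (r ^ d) ≤ C * ν (Φ x r)) :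
    μH[d] s ≤ 10 ^ d * C * ν A := by
  choose! ρ hρ hΦA hρν using h
  refine hausdorffMeasure_le_of_forall_countable_cover fun η hη => ?_
  set r := fun x => ρ x (η / 10)
  have hrs (x) (hx : x ∈ s) : r x ∈ Ioo 0 (η / 10) := hρ x hx _ (by positivity)
  obtain ⟨u, hus, huc, hdisj, hcov⟩ := exists_countable_pairwiseDisjoint_closedBall_cover s
    (ρ := r) fun x hx => ⟨(hrs x hx).1, (hrs x hx).2.le⟩
  have hr (x : u) : r x ∈ Ioo 0 (η / 10) := hrs x (hus x.2)
  have hdiam (x : u) : ediam (closedBall (x : X) (5 * r x)) ≤ 10 * ENNReal.ofReal (r x) := by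
    grw [ediam_closedBall_le_ofReal _ (by linarith [(hr x).1]), ENNReal.ofReal_mul (by norm_num),
      ← mul_assoc]
    norm_num
  have hdisjΦ : u.PairwiseDisjoint fun x => Φ x (r x) := fun x hx y hy hxy =>
    ((hdisj hx hy hxy).preimage Prod.fst).mono
      ((hΦ x _).trans (preimage_mono ball_subset_closedBall))
      ((hΦ y _).trans (preimage_mono ball_subset_closedBall))
  refine ⟨(fun x => closedBall x (5 * r x)) '' u, huc.image _, sUnion_image .. ▸ hcov, ?_, ?_⟩
  · rintro _ ⟨x, hx, rfl⟩
    refine (hdiam ⟨x, hx⟩).trans ?_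
    rw [← ENNReal.ofReal_ofNat, ← ENNReal.ofReal_mul (by norm_num)]
    exact ENNReal.ofReal_le_ofReal (by linarith [(hr ⟨x, hx⟩).2])
  calc ∑' t : (fun x => closedBall x (5 * r x)) '' u, ediam (t : Set X) ^ d
      ≤ ∑' x : u, ediam (closedBall (x : X) (5 * r x)) ^ d :=
        ENNReal.tsum_le_tsum_comp_of_surjective imageFactorization_surjective _
    _ ≤ ∑' x : u, 10 ^ d * C * ν (Φ x (r x)) := by
        refine ENNReal.tsum_le_tsum fun x => ?_
        grw [hdiam x, ENNReal.mul_rpow_of_nonneg _ _ hd,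
          ENNReal.ofReal_rpow_of_nonneg (hr x).1.le hd, hρν x (hus x.2) _ (by positivity), mul_assoc]
    _ = 10 ^ d * C * ν (⋃ x ∈ u, Φ x (r x)) := by
        rw [ENNReal.tsum_mul_left, measure_biUnion huc hdisjΦ fun x _ => hΦm x _]
    _ ≤ 10 ^ d * C * ν A := by
        gcongr
        exact iUnion₂_subset fun x hx => hΦA x (hus hx) _ (by positivity)

end Hausdorff

section Integral

variable {α : Type*} [MeasurableSpace α] {μ : Measure α}

theorem ofReal_integral_le_lintegral_ofReal (f : α → ℝ) :
    ENNReal.ofReal (∫ x, f x ∂μ) ≤ ∫⁻ x, ENNReal.ofReal (f x) ∂μ := by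
  by_cases hf : Integrable f μ
  · calc ENNReal.ofReal (∫ x, f x ∂μ) ≤ ENNReal.ofReal (∫ x, max (f x) 0 ∂μ) :=
          ENNReal.ofReal_le_ofReal (integral_mono hf hf.pos_part fun x => le_max_left _ _)
      _ = ∫⁻ x, ENNReal.ofReal (f x) ∂μ := by
          rw [ofReal_integral_eq_lintegral_ofReal hf.pos_part
            (.of_forall fun x => le_max_right _ _)]
          simp only [ENNReal.ofReal_max, ENNReal.ofReal_zero, max_zero]
  · simp [integral_undef hf]

theorem ofReal_le_mul_withDensity_of_mul_le_setIntegral {f : α → ℝ} {S : Set α}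
    (hS : MeasurableSet S) {c a : ℝ} (hc : 0 < c) (h : c * a ≤ ∫ x in S, f x ∂μ) :
    ENNReal.ofReal a ≤ ENNReal.ofReal c⁻¹ * μ.withDensity (fun x => ENNReal.ofReal (f x)) S := by
  rw [withDensity_apply _ hS, ← inv_mul_cancel_left₀ hc.ne' a,
    ENNReal.ofReal_mul (inv_nonneg.2 hc.le)]
  gcongr
  exact (ENNReal.ofReal_le_ofReal h).trans (ofReal_integral_le_lintegral_ofReal f)

end Integral

theorem tendsto_measure_univ_prod_Ioo_sub_sq {Y : Type*} [MeasurableSpace Y] (ν : Measure (Y × ℝ))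
    {T θ : ℝ} (hθ : 0 < θ) (hfin : ν (univ ×ˢ Ioo (T - θ ^ 2) T) ≠ ∞) :
    Tendsto (fun ε => ν (univ ×ˢ Ioo (T - ε ^ 2) T)) (𝓝[>] 0) (𝓝 0) := by
  have hempty : ⋂ ε > (0 : ℝ), univ ×ˢ Ioo (T - ε ^ 2) T = (∅ : Set (Y × ℝ)) := by
    refine eq_empty_of_forall_notMem fun z hz => ?_
    simp only [mem_iInter, mem_prod, mem_univ, mem_Ioo, true_and] at hz
    obtain ⟨hlt, -⟩ := hz (Real.sqrt (T - z.2)) (Real.sqrt_pos.2 (by linarith [(hz 1 one_pos).2]))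
    rw [Real.sq_sqrt (by linarith [(hz 1 one_pos).2])] at hlt
    linarith
  have := tendsto_measure_biInter_gt (μ := ν) (a := 0) (s := fun ε => univ ×ˢ Ioo (T - ε ^ 2) T)
    (fun r _ => (MeasurableSet.univ.prod measurableSet_Ioo).nullMeasurableSet)
    (fun i j hi hij => prod_mono subset_rfl (Ioo_subset_Ioo_left (by gcongr)))
    ⟨θ, hθ, hfin⟩
  rwa [hempty, measure_empty] at this

theorem stmt_9_general (θ εq δ T : ℝ) (hθ : 0 < θ) (hεq : 0 < εq)
    (hδ : 0 < δ)
    (F : EuclideanSpace ℝ (Fin 3) × ℝ → ℝ)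
    (hFint : IntegrableOn F ((Set.univ : Set (EuclideanSpace ℝ (Fin 3))) ×ˢ
      Set.Ioo (T - θ^2) T) volume)
    (σ : Set (EuclideanSpace ℝ (Fin 3)))
    (hσ : ∀ x ∈ σ, ∀ ehat : ℝ, 0 < ehat → ehat < θ →
      ∃ r : ℝ, 0 < r ∧ r < ehat/5 ∧
        (εq/2) * r ^ (2*δ) ≤
          ∫ z in (Metric.ball x r ×ˢ Set.Ioo (T - r^2) T), F z) :
    (∀ ehat : ℝ, 0 < ehat → ehat < θ →
      μH[2*δ] σ ≤ ENNReal.ofReal ((2 * 5 ^ (2*δ) / εq) *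
        ∫ z in ((Set.univ : Set (EuclideanSpace ℝ (Fin 3))) ×ˢ
          Set.Ioo (T - ehat^2) T), F z)) ∧
    μH[2*δ] σ = 0 := by
  set ν := volume.withDensity fun z => ENNReal.ofReal (F z)
  set K := 10 ^ (2 * δ) * ENNReal.ofReal (εq / 2)⁻¹
  have hbound : ∀ ε ∈ Ioo 0 θ, μH[2 * δ] σ ≤ K * ν (univ ×ˢ Ioo (T - ε ^ 2) T) := by
    rintro ε ⟨hε, hεθ⟩
    refine hausdorffMeasure_le_of_forall_exists_radius ν (by positivity)
      (Φ := fun x r => ball x r ×ˢ Ioo (T - r ^ 2) T) (fun x r => prod_subset_preimage_fst _ _)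
      (fun x r => measurableSet_ball.prod measurableSet_Ioo) fun x hx η hη => ?_
    obtain ⟨r, hr, hrη, hmass⟩ :=
      hσ x hx (min η ε) (lt_min hη hε) ((min_le_right _ _).trans_lt hεθ)
    refine ⟨r, ⟨hr, by linarith [min_le_left η ε]⟩,
      prod_mono (subset_univ _) (Ioo_subset_Ioo_left ?_),
      ofReal_le_mul_withDensity_of_mul_le_setIntegral (measurableSet_ball.prod measurableSet_Ioo)
        (by positivity) hmass⟩
    gcongr
    linarith [min_le_right η ε]
  have hfin : ν (univ ×ˢ Ioo (T - θ ^ 2) T) ≠ ∞ := by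
    rw [withDensity_apply _ (MeasurableSet.univ.prod measurableSet_Ioo)]
    exact hFint.lintegral_lt_top.ne
  have hK : K ≠ ∞ :=
    ENNReal.mul_ne_top (ENNReal.rpow_ne_top_of_nonneg (by positivity) (by norm_num))
      ENNReal.ofReal_ne_top
  have hlim := ENNReal.Tendsto.const_mul (tendsto_measure_univ_prod_Ioo_sub_sq ν hθ hfin) (.inr hK)
  have hzero : μH[2 * δ] σ = 0 := nonpos_iff_eq_zero.1 <|
    ge_of_tendsto (by simpa using hlim) (mem_of_superset (Ioo_mem_nhdsGT hθ) hbound)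
  exact ⟨fun _ _ _ => hzero ▸ zero_le, hzero⟩

theorem stmt_9 (θ εq δ T : ℝ) (hθ : 0 < θ) (hθ' : θ ≤ 1) (hεq : 0 < εq)
    (hδ : 0 < δ) (hδ' : δ ≤ 1/2)
    (F : EuclideanSpace ℝ (Fin 3) × ℝ → ℝ) (hF : ∀ z, 0 ≤ F z)
    (hFint : IntegrableOn F ((Set.univ : Set (EuclideanSpace ℝ (Fin 3))) ×ˢ
      Set.Ioo (T - θ^2) T) volume)
    (σ : Set (EuclideanSpace ℝ (Fin 3)))
    (hσ : ∀ x ∈ σ, ∀ ehat : ℝ, 0 < ehat → ehat < θ →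
      ∃ r : ℝ, 0 < r ∧ r < ehat/5 ∧
        (εq/2) * r ^ (2*δ) ≤
          ∫ z in (Metric.ball x r ×ˢ Set.Ioo (T - r^2) T), F z) :
    (∀ ehat : ℝ, 0 < ehat → ehat < θ →
      μH[2*δ] σ ≤ ENNReal.ofReal ((2 * 5 ^ (2*δ) / εq) *
        ∫ z in ((Set.univ : Set (EuclideanSpace ℝ (Fin 3))) ×ˢ
          Set.Ioo (T - ehat^2) T), F z)) ∧
    μH[2*δ] σ = 0 :=
  stmt_9_general θ εq δ T hθ hεq hδ F hFint σ hσ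
end

section
/- Let q ∈ (2,3) and 0 < 2r ≤ ρ. For nonnegative reals A_ρ, A_r, A_{2r}, B_ρ, B, C_{2r}, D_ρ, D_r, D_{2r}: if C_{2r} ≤ K₁[(r/ρ)³ A_ρ^{3/2} + A_ρ^{3(4-q)/8} (ρ/r)³ B_ρ^{3/4}] and D_{2r} ≤ K₂[(ρ/r)² A_ρ^{3(4-q)/8} B_ρ^{3/4} + (r/ρ)^{5/2} D_ρ], and A_r^{3/2} + D_r² ≤ K₃[C_{2r} + D_{2r}² + A_{2r}^{3(4-q)/4} B^{3/2}] with A_{2r} ≤ (ρ/(2r)) A_ρ and B_ρ, B ≤ ε < 1, then there is a constant K depending only on q, K₁, K₂, K₃ such that A_r^{3/2} + D_r² ≤ K[(r/ρ)³ (A_ρ^{3/2} + D_ρ²) + (ρ/r)⁶ A_ρ^{3(4-q)/4} ε^{1/2} + ε]. -/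
open Real

private lemma sqr_rpow {x : ℝ} (hx : 0 ≤ x) (a : ℝ) : (x ^ a)^2 = x ^ (2*a) := by
  rw [← Real.rpow_natCast (x ^ a) 2, ← Real.rpow_mul hx]
  norm_num [mul_comm]

private lemma eps_mono {ε : ℝ} (h0 : 0 ≤ ε) (h1 : ε ≤ 1) {a b : ℝ} (hb : 0 < b)
    (hab : b ≤ a) : ε ^ a ≤ ε ^ b := by
  rcases eq_or_lt_of_le h0 with h | h
  · rw [← h, Real.zero_rpow (by linarith), Real.zero_rpow hb.ne']
  · exact Real.rpow_le_rpow_of_exponent_ge h h1 hab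

private lemma young2 (a b : ℝ) : a * b ≤ (a^2 + b^2)/2 := by
  nlinarith [sq_nonneg (a - b)]

private lemma sq_add_le (u v : ℝ) : (u + v)^2 ≤ 2*u^2 + 2*v^2 := by
  nlinarith [sq_nonneg (u - v)]

private lemma inner_comb {K₁ K₂ P1 P2 X ε : ℝ} (hK₁ : 0 ≤ K₁) (hP1 : 0 ≤ P1)
    (hP2 : 0 ≤ P2) (hX : 0 ≤ X) (hε : 0 ≤ ε) :
    K₁*(P1 + (X+ε)/2) + 2*K₂^2*(X+P2) + X ≤ (K₁ + 2*K₂^2 + 1)*(P1 + P2 + X + ε) := by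
  nlinarith [mul_nonneg hK₁ hP2, mul_nonneg hK₁ hX, mul_nonneg hK₁ hε,
    mul_nonneg (sq_nonneg K₂) hP1, mul_nonneg (sq_nonneg K₂) hε]

set_option maxHeartbeats 2000000 in
theorem stmt_15 (q K₁ K₂ K₃ : ℝ) (hq : 2 < q) (hq' : q < 3)
    (hK₁ : 0 < K₁) (hK₂ : 0 < K₂) (hK₃ : 0 < K₃) :
    ∃ K : ℝ, 0 < K ∧
      ∀ r ρ Aρ Bρ B ε C2r D2r Dρ Ar Dr A2r : ℝ,
        0 < r → 2*r ≤ ρ →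
        0 ≤ Aρ → 0 ≤ Bρ → 0 ≤ B → 0 ≤ ε → ε < 1 →
        0 ≤ C2r → 0 ≤ D2r → 0 ≤ Dρ → 0 ≤ Ar → 0 ≤ Dr → 0 ≤ A2r →
        C2r ≤ K₁ * ((r/ρ)^3 * Aρ ^ ((3:ℝ)/2) +
          Aρ ^ (3*(4-q)/8) * (ρ/r)^3 * Bρ ^ ((3:ℝ)/4)) →
        D2r ≤ K₂ * ((ρ/r)^2 * Aρ ^ (3*(4-q)/8) * Bρ ^ ((3:ℝ)/4) +
          (r/ρ) ^ ((5:ℝ)/2) * Dρ) →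
        Ar ^ ((3:ℝ)/2) + Dr^2 ≤ K₃ * (C2r + D2r^2 + A2r ^ (3*(4-q)/4) * B ^ ((3:ℝ)/2)) →
        A2r ≤ (ρ/(2*r)) * Aρ → Bρ ≤ ε → B ≤ ε →
        Ar ^ ((3:ℝ)/2) + Dr^2 ≤
          K * ((r/ρ)^3 * (Aρ ^ ((3:ℝ)/2) + Dρ^2) +
            (ρ/r)^6 * Aρ ^ (3*(4-q)/4) * ε ^ ((1:ℝ)/2) + ε) := by
  refine ⟨K₃ * (K₁ + 2*K₂^2 + 1), by positivity, ?_⟩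
  intro r ρ Aρ Bρ B ε C2r D2r Dρ Ar Dr A2r hr hrρ hAρ hBρ hB hε hε1 hC hD hDρ0 hAr0 hDr0 hA20
    hC2 hD2 hmain hA2r hBε hBε'
  have hρ : 0 < ρ := by linarith
  -- opaque scale ratios
  obtain ⟨t, ht⟩ : ∃ x : ℝ, r/ρ = x := ⟨_, rfl⟩
  obtain ⟨s, hsd⟩ : ∃ x : ℝ, ρ/r = x := ⟨_, rfl⟩
  have hts : ρ/(2*r) = s/2 := by rw [mul_comm, ← div_div, hsd]
  rw [ht, hsd] at hC2 hD2
  rw [hts] at hA2r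
  rw [ht, hsd]
  have ht0 : 0 < t := by rw [← ht]; exact div_pos hr hρ
  have ht1 : t ≤ 1 := by rw [← ht, div_le_one hρ]; linarith
  have hs1 : 1 ≤ s := by rw [← hsd, le_div_iff₀ hr]; linarith
  clear ht hsd hts hrρ
  -- opaque exponent
  obtain ⟨α, hα⟩ : ∃ x : ℝ, 3*(4-q)/8 = x := ⟨_, rfl⟩
  have h2α : 3*(4-q)/4 = 2*α := by rw [← hα]; ring
  have hα0 : 0 < α := by rw [← hα]; linarith
  have hα1 : α < 3/4 := by rw [← hα]; linarith
  rw [hα] at hC2 hD2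
  rw [h2α] at hmain ⊢
  clear hα h2α hq hq'
  have hε12 : (0:ℝ) ≤ ε ^ ((1:ℝ)/2) := Real.rpow_nonneg hε _
  have hX0 : (0:ℝ) ≤ s^6 * Aρ ^ (2*α) * ε ^ ((1:ℝ)/2) := by positivity
  have hBρ34 : Bρ ^ ((3:ℝ)/4) ≤ ε ^ ((3:ℝ)/4) :=
    Real.rpow_le_rpow hBρ hBε (by norm_num)
  -- Young
  have hYoung : Aρ ^ α * s^3 * ε ^ ((3:ℝ)/4)
      ≤ (s^6 * Aρ ^ (2*α) * ε ^ ((1:ℝ)/2) + ε)/2 := by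
    have hmul : Aρ ^ α * s^3 * ε ^ ((3:ℝ)/4)
        = (s^3 * Aρ ^ α * ε ^ ((1:ℝ)/4)) * ε ^ ((1:ℝ)/2) := by
      have h34 : ε ^ ((3:ℝ)/4) = ε ^ ((1:ℝ)/4) * ε ^ ((1:ℝ)/2) := by
        rw [← Real.rpow_add' hε (by norm_num)]; norm_num
      rw [h34]; ring
    have hsq : (s^3 * Aρ ^ α * ε ^ ((1:ℝ)/4))^2 = s^6 * Aρ ^ (2*α) * ε ^ ((1:ℝ)/2) := by
      rw [mul_pow, mul_pow, sqr_rpow hAρ, sqr_rpow hε,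
        show (2:ℝ)*((1:ℝ)/4) = (1:ℝ)/2 by norm_num]
      ring
    have hb2 : (ε ^ ((1:ℝ)/2))^2 = ε := by
      rw [sqr_rpow hε, show (2:ℝ)*((1:ℝ)/2) = (1:ℝ) by norm_num, Real.rpow_one]
    calc Aρ ^ α * s^3 * ε ^ ((3:ℝ)/4)
        = (s^3 * Aρ ^ α * ε ^ ((1:ℝ)/4)) * ε ^ ((1:ℝ)/2) := hmul
      _ ≤ ((s^3 * Aρ ^ α * ε ^ ((1:ℝ)/4))^2 + (ε ^ ((1:ℝ)/2))^2)/2 := young2 _ _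
      _ = (s^6 * Aρ ^ (2*α) * ε ^ ((1:ℝ)/2) + ε)/2 := by rw [hsq, hb2]
  -- bound for C2r
  have hC2' : C2r ≤ K₁ * (t^3 * Aρ ^ ((3:ℝ)/2)
      + (s^6 * Aρ ^ (2*α) * ε ^ ((1:ℝ)/2) + ε)/2) := by
    refine hC2.trans ?_
    have h1 : Aρ ^ α * s^3 * Bρ ^ ((3:ℝ)/4)
        ≤ (s^6 * Aρ ^ (2*α) * ε ^ ((1:ℝ)/2) + ε)/2 := by
      have := mul_le_mul_of_nonneg_left hBρ34 (show (0:ℝ) ≤ Aρ ^ α * s^3 by positivity)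
      linarith
    have := mul_le_mul_of_nonneg_left
      (add_le_add_left h1 (t^3 * Aρ ^ ((3:ℝ)/2))) hK₁.le
    linarith
  -- bound for D2r^2
  have hD2sq : D2r^2 ≤ 2*K₂^2 * (s^6 * Aρ ^ (2*α) * ε ^ ((1:ℝ)/2) + t^3 * Dρ^2) := by
    have hu0 : (0:ℝ) ≤ s^2 * Aρ ^ α * Bρ ^ ((3:ℝ)/4) := by positivity
    have hv0 : (0:ℝ) ≤ t ^ ((5:ℝ)/2) * Dρ := by positivity
    have husq : (s^2 * Aρ ^ α * Bρ ^ ((3:ℝ)/4))^2 ≤ s^6 * Aρ ^ (2*α) * ε ^ ((1:ℝ)/2) := by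
      have h1 : (s^2 * Aρ ^ α * Bρ ^ ((3:ℝ)/4))^2 = s^4 * Aρ ^ (2*α) * Bρ ^ ((3:ℝ)/2) := by
        rw [mul_pow, mul_pow, sqr_rpow hAρ, sqr_rpow hBρ,
          show (2:ℝ)*((3:ℝ)/4) = (3:ℝ)/2 by norm_num]
        ring
      have h2 : Bρ ^ ((3:ℝ)/2) ≤ ε ^ ((1:ℝ)/2) :=
        (Real.rpow_le_rpow hBρ hBε (by norm_num)).trans
          (eps_mono hε hε1.le (by norm_num) (by norm_num))
      have h3 : s^4 ≤ s^6 := pow_le_pow_right₀ hs1 (by norm_num)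
      rw [h1]
      exact mul_le_mul (mul_le_mul_of_nonneg_right h3 (Real.rpow_nonneg hAρ _)) h2
        (Real.rpow_nonneg hBρ _) (by positivity)
    have hvsq : (t ^ ((5:ℝ)/2) * Dρ)^2 ≤ t^3 * Dρ^2 := by
      have h1 : (t ^ ((5:ℝ)/2) * Dρ)^2 = t ^ (5:ℕ) * Dρ^2 := by
        rw [mul_pow, sqr_rpow ht0.le,
          show (2:ℝ)*((5:ℝ)/2) = ((5:ℕ):ℝ) by norm_num, Real.rpow_natCast]
      have h2 : t ^ (5:ℕ) ≤ t^3 := pow_le_pow_of_le_one ht0.le ht1 (by norm_num)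
      rw [h1]
      exact mul_le_mul_of_nonneg_right h2 (sq_nonneg _)
    have hDsq : D2r^2 ≤ (K₂ * ((s^2 * Aρ ^ α * Bρ ^ ((3:ℝ)/4)) + (t ^ ((5:ℝ)/2) * Dρ)))^2 :=
      pow_le_pow_left₀ hD hD2 2
    have hexp : (K₂ * ((s^2 * Aρ ^ α * Bρ ^ ((3:ℝ)/4)) + (t ^ ((5:ℝ)/2) * Dρ)))^2
        ≤ K₂^2 * (2*(s^2 * Aρ ^ α * Bρ ^ ((3:ℝ)/4))^2 + 2*(t ^ ((5:ℝ)/2) * Dρ)^2) := by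
      rw [mul_pow]
      exact mul_le_mul_of_nonneg_left (sq_add_le _ _) (sq_nonneg _)
    have hlast : K₂^2 * (2*(s^2 * Aρ ^ α * Bρ ^ ((3:ℝ)/4))^2 + 2*(t ^ ((5:ℝ)/2) * Dρ)^2)
        ≤ 2*K₂^2 * (s^6 * Aρ ^ (2*α) * ε ^ ((1:ℝ)/2) + t^3 * Dρ^2) := by
      have := mul_le_mul_of_nonneg_left (add_le_add husq hvsq) (sq_nonneg K₂)
      linarith
    linarith
  -- bound for A2r^{2α} B^{3/2}
  have hAB : A2r ^ (2*α) * B ^ ((3:ℝ)/2) ≤ s^6 * Aρ ^ (2*α) * ε ^ ((1:ℝ)/2) := by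
    have hs0 : (0:ℝ) ≤ s := by linarith
    have h1 : A2r ^ (2*α) ≤ (s/2 * Aρ) ^ (2*α) :=
      Real.rpow_le_rpow hA20 hA2r (by linarith)
    have h2 : (s/2 * Aρ) ^ (2*α) = (s/2) ^ (2*α) * Aρ ^ (2*α) :=
      Real.mul_rpow (by linarith) hAρ
    have h3 : (s/2) ^ (2*α) ≤ s ^ (2*α) :=
      Real.rpow_le_rpow (by linarith) (by linarith) (by linarith)
    have h4 : s ^ (2*α) ≤ s ^ ((2:ℝ)) :=
      Real.rpow_le_rpow_of_exponent_le hs1 (by linarith)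
    have h5 : s ^ ((2:ℝ)) = s^2 := by
      rw [show (2:ℝ) = ((2:ℕ):ℝ) by norm_num, Real.rpow_natCast]
    have h6 : s^2 ≤ s^6 := pow_le_pow_right₀ hs1 (by norm_num)
    have hA' : A2r ^ (2*α) ≤ s^6 * Aρ ^ (2*α) := by
      calc A2r ^ (2*α) ≤ (s/2) ^ (2*α) * Aρ ^ (2*α) := by rw [← h2]; exact h1
        _ ≤ s^6 * Aρ ^ (2*α) := by
            apply mul_le_mul_of_nonneg_right _ (Real.rpow_nonneg hAρ _)
            calc (s/2) ^ (2*α) ≤ s ^ (2*α) := h3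
              _ ≤ s ^ ((2:ℝ)) := h4
              _ = s^2 := h5
              _ ≤ s^6 := h6
    have hB' : B ^ ((3:ℝ)/2) ≤ ε ^ ((1:ℝ)/2) :=
      (Real.rpow_le_rpow hB hBε' (by norm_num)).trans
        (eps_mono hε hε1.le (by norm_num) (by norm_num))
    exact mul_le_mul hA' hB' (Real.rpow_nonneg hB _) (by positivity)
  -- combine
  have hP10 : (0:ℝ) ≤ t^3 * Aρ ^ ((3:ℝ)/2) := by positivity
  have hP20 : (0:ℝ) ≤ t^3 * Dρ^2 := by positivity
  have hinner := inner_comb (K₂ := K₂) hK₁.le hP10 hP20 hX0 hε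
  have hstep : Ar ^ ((3:ℝ)/2) + Dr^2
      ≤ K₃ * (K₁ * (t^3 * Aρ ^ ((3:ℝ)/2) + (s^6 * Aρ ^ (2*α) * ε ^ ((1:ℝ)/2) + ε)/2)
        + 2*K₂^2 * (s^6 * Aρ ^ (2*α) * ε ^ ((1:ℝ)/2) + t^3 * Dρ^2)
        + s^6 * Aρ ^ (2*α) * ε ^ ((1:ℝ)/2)) := by
    refine hmain.trans ?_
    apply mul_le_mul_of_nonneg_left _ hK₃.le
    have := add_le_add (add_le_add hC2' hD2sq) hAB
    linarith
  have hfinal := mul_le_mul_of_nonneg_left hinner hK₃.le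
  have hgoal : K₃ * (K₁ + 2*K₂^2 + 1) * (t^3 * (Aρ ^ ((3:ℝ)/2) + Dρ^2)
        + s^6 * Aρ ^ (2*α) * ε ^ ((1:ℝ)/2) + ε)
      = K₃ * ((K₁ + 2*K₂^2 + 1) * (t^3 * Aρ ^ ((3:ℝ)/2) + t^3 * Dρ^2
        + s^6 * Aρ ^ (2*α) * ε ^ ((1:ℝ)/2) + ε)) := by ring
  rw [hgoal]
  exact hstep.trans hfinal
end
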